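/- Let T_n ∈ SL(2,ℤ), n ≥ 1, be hyperbolic automorphisms with largest eigenvalue λ_n (|λ_n| > 1), and suppose λ_n → ∞. Then for every k ≥ 2, the sequence T_nᵏ is mixing on 𝕋². -/

import Mathlib

open Matrix Filter Topology Polynomial

noncomputable section

abbrev SL2 := Matrix.SpecialLinearGroup (Fin 2) ℤ

/-- All eigenvalues of `M` have absolute value different from `1`. -/
def IsHyperbolic (M : Matrix (Fin 2) (Fin 2) ℤ) : Prop :=
  ∀ z : ℂ, (M.map (Int.cast : ℤ → ℂ)).charpoly.IsRoot z → ‖z‖ ≠ 1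

/-- A sequence of integer matrices is mixing on 𝕋² (Fourier-analytic characterization). -/
def MixingSeq (T : ℕ → Matrix (Fin 2) (Fin 2) ℤ) : Prop :=
  ∀ x y : Fin 2 → ℤ, ¬(x = 0 ∧ y = 0) → {n : ℕ | (T n)ᵀ.mulVec x + y = 0}.Finite

/-- Chebyshev-like coefficient sequence: `M ^ (j+1) = a (j+1) • M - a j • 1`. -/
def aseq (t : ℤ) : ℕ → ℤ
  | 0 => 0
  | 1 => 1
  | (j+2) => t * aseq t (j+1) - aseq t j

lemma charpoly_fin_two' {R : Type*} [CommRing R] (M : Matrix (Fin 2) (Fin 2) R) :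
    M.charpoly = X ^ 2 - C M.trace * X + C M.det := by
  rw [Matrix.charpoly, Matrix.det_fin_two, Matrix.trace_fin_two, Matrix.det_fin_two,
    charmatrix_apply_eq, charmatrix_apply_eq, charmatrix_apply_ne _ _ _ (by decide),
    charmatrix_apply_ne _ _ _ (by decide), C_add, C_sub, C_mul, C_mul]
  ring

lemma ch_two (M : Matrix (Fin 2) (Fin 2) ℤ) : M * M = M.trace • M - M.det • 1 := by
  ext i j
  simp only [Matrix.sub_apply, Matrix.smul_apply, smul_eq_mul, Matrix.mul_apply,
    Fin.sum_univ_two, Matrix.trace_fin_two, Matrix.det_fin_two, Matrix.one_apply]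
  fin_cases i <;> fin_cases j <;> simp <;> ring

lemma pow_rep (M : Matrix (Fin 2) (Fin 2) ℤ) (hdet : M.det = 1) :
    ∀ j, M ^ (j + 1) = aseq M.trace (j + 1) • M - aseq M.trace j • 1
  | 0 => by simp [aseq]
  | (j + 1) => by
    have ih := pow_rep M hdet j
    have h2 : M * M = M.trace • M - 1 := by rw [ch_two, hdet, one_smul]
    rw [pow_succ, ih, sub_mul, smul_mul_assoc, smul_mul_assoc, one_mul, h2]
    show _ = aseq M.trace (j+2) • M - aseq M.trace (j+1) • 1
    have ha : aseq M.trace (j+2) = M.trace * aseq M.trace (j+1) - aseq M.trace j := rfl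
    rw [ha]
    module

lemma aseq_abs_mono (t : ℤ) (ht : 2 ≤ |t|) : ∀ j, |aseq t j| ≤ |aseq t (j + 1)|
  | 0 => by simp [aseq]
  | 1 => by
    have : aseq t 2 = t := by show t * aseq t 1 - aseq t 0 = t; simp [aseq]
    rw [this]; show |aseq t 1| ≤ |t|; simp [aseq]; omega
  | (j + 2) => by
    have ih := aseq_abs_mono t ht (j + 1)
    have h1 : aseq t (j + 3) = t * aseq t (j + 2) - aseq t (j + 1) := rfl
    have h2 := abs_sub_abs_le_abs_sub (t * aseq t (j + 2)) (aseq t (j + 1))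
    rw [abs_mul] at h2
    rw [h1]
    nlinarith [abs_nonneg (aseq t (j + 2)), abs_nonneg (aseq t (j + 1))]

lemma abs_le_aseq (t : ℤ) (ht : 2 ≤ |t|) {k : ℕ} (hk : 2 ≤ k) : |t| ≤ |aseq t k| := by
  induction k, hk using Nat.le_induction with
  | base =>
    have : aseq t 2 = t := by show t * aseq t 1 - aseq t 0 = t; simp [aseq]
    rw [this]
  | succ m hm ih => exact ih.trans (aseq_abs_mono t ht m)

lemma quad_unit (t p q : ℤ) (hq : q ≠ 0) (hquad : p * p - t * (p * q) + q * q = 0) :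
    ∃ s : ℤ, (s = 1 ∨ s = -1) ∧ t * s = 2 := by
  set g : ℕ := Int.gcd p q with hg
  have hgpos : 0 < g := Int.gcd_pos_iff.mpr (Or.inr hq)
  have hgz : ((g : ℤ)) ≠ 0 := by exact_mod_cast hgpos.ne'
  set p' : ℤ := p / g with hp'
  set q' : ℤ := q / g with hq'
  have hp : (g : ℤ) * p' = p := Int.mul_ediv_cancel' (Int.gcd_dvd_left p q)
  have hqq : (g : ℤ) * q' = q := Int.mul_ediv_cancel' (Int.gcd_dvd_right p q)
  have hcop : Int.gcd p' q' = 1 := Int.gcd_div_gcd_div_gcd hgpos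
  have hcop' : IsCoprime p' q' := Int.isCoprime_iff_gcd_eq_one.mpr hcop
  have hinner : p' * p' - t * (p' * q') + q' * q' = 0 := by
    have h : (g : ℤ) * (g : ℤ) * (p' * p' - t * (p' * q') + q' * q') = 0 := by
      rw [← hp, ← hqq] at hquad; linear_combination hquad
    have := mul_eq_zero.mp h
    rcases this with h' | h'
    · exact absurd (mul_eq_zero.mp h') (by push_neg; exact ⟨hgz, hgz⟩)
    · exact h'
  have hdvd1 : q' ∣ p' * p' := ⟨t * p' - q', by linarith⟩
  have hdvd2 : p' ∣ q' * q' := ⟨t * q' - p', by linarith⟩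
  have hu1 : IsUnit q' :=
    (hcop'.symm.mul_right hcop'.symm).isUnit_of_dvd' dvd_rfl hdvd1
  have hu2 : IsUnit p' :=
    (hcop'.mul_right hcop').isUnit_of_dvd' dvd_rfl hdvd2
  rw [Int.isUnit_iff] at hu1 hu2
  refine ⟨p' * q', ?_, ?_⟩
  · rcases hu1 with h1 | h1 <;> rcases hu2 with h2 | h2 <;> simp [h1, h2]
  · rcases hu1 with h1 | h1 <;> rcases hu2 with h2 | h2 <;>
      (rw [h1, h2] at hinner ⊢; ring_nf at hinner ⊢; omega)

lemma trace_map' {R : Type*} [CommRing R] (A : Matrix (Fin 2) (Fin 2) ℤ) :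
    (A.map (Int.cast : ℤ → R)).trace = ((A.trace : ℤ) : R) := by
  simp [Matrix.trace_fin_two, Matrix.map_apply]

lemma det_map' {R : Type*} [CommRing R] (A : Matrix (Fin 2) (Fin 2) ℤ) :
    (A.map (Int.cast : ℤ → R)).det = ((A.det : ℤ) : R) := by
  simp [Matrix.det_fin_two, Matrix.map_apply]

lemma cross_ne_zero (A : Matrix (Fin 2) (Fin 2) ℤ) (hdet : A.det = 1)
    (hhyp : _root_.IsHyperbolic A) (x : Fin 2 → ℤ) (hx : x ≠ 0) :
    (Aᵀ.mulVec x) 0 * x 1 - (Aᵀ.mulVec x) 1 * x 0 ≠ 0 := by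
  intro hD
  set M : Matrix (Fin 2) (Fin 2) ℤ := Aᵀ with hM
  set t : ℤ := A.trace with htdef
  set u : Fin 2 → ℤ := M.mulVec x with hu
  have hMM : M * M = t • M - 1 := by
    have := ch_two M
    rwa [Matrix.trace_transpose, Matrix.det_transpose, hdet, one_smul] at this
  have hMu : M.mulVec u = t • u - x := by
    rw [hu, Matrix.mulVec_mulVec, hMM, Matrix.sub_mulVec, Matrix.smul_mulVec,
      Matrix.one_mulVec]
  have hu0 : u 0 = M 0 0 * x 0 + M 0 1 * x 1 := by
    simp [hu, Matrix.mulVec, dotProduct, Fin.sum_univ_two]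
  have hu1 : u 1 = M 1 0 * x 0 + M 1 1 * x 1 := by
    simp [hu, Matrix.mulVec, dotProduct, Fin.sum_univ_two]
  have hv0 : M 0 0 * u 0 + M 0 1 * u 1 = t * u 0 - x 0 := by
    have := congrFun hMu 0
    simpa [Matrix.mulVec, dotProduct, Fin.sum_univ_two] using this
  have hv1 : M 1 0 * u 0 + M 1 1 * u 1 = t * u 1 - x 1 := by
    have := congrFun hMu 1
    simpa [Matrix.mulVec, dotProduct, Fin.sum_univ_two] using this
  -- a nonzero coordinate of x
  have hex : x 0 ≠ 0 ∨ x 1 ≠ 0 := by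
    by_contra h
    push_neg at h
    exact hx (funext fun i => by fin_cases i <;> simp [h.1, h.2])
  have hquad : ∃ i : Fin 2, x i ≠ 0 ∧ u i * u i - t * (u i * x i) + x i * x i = 0 := by
    rcases hex with h | h
    · exact ⟨0, h, by linear_combination x 0 * hv0 + M 0 1 * hD + u 0 * hu0⟩
    · exact ⟨1, h, by linear_combination x 1 * hv1 - M 1 0 * hD + u 1 * hu1⟩
  obtain ⟨i, hxi, hq⟩ := hquad
  obtain ⟨s, hs, hts⟩ := quad_unit t (u i) (x i) hxi hq
  -- s = ±1 is a root of the complex characteristic polynomial of A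
  have hroot : ((A.map (Int.cast : ℤ → ℂ)).charpoly).IsRoot (s : ℂ) := by
    rw [charpoly_fin_two', _root_.trace_map', _root_.det_map', hdet]
    have : (s : ℂ) ^ 2 - (t : ℂ) * (s : ℂ) + 1 = 0 := by
      have hss : s * s = 1 := by rcases hs with h | h <;> simp [h]
      have : (s * s - t * s + 1 : ℤ) = 0 := by rw [hss, hts]; ring
      have := congrArg (Int.cast : ℤ → ℂ) this
      push_cast at this
      linear_combination this
    simp [Polynomial.IsRoot]
    linear_combination this
  have habs : ‖(s : ℂ)‖ = 1 := by rcases hs with h | h <;> simp [h]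
  exact hhyp (s : ℂ) hroot habs

theorem stmt9 (T : ℕ → SL2) (hT : ∀ n, IsHyperbolic ↑(T n)) (lam : ℕ → ℝ)
    (hroot : ∀ n, (((T n : Matrix (Fin 2) (Fin 2) ℤ)).map
      (Int.cast : ℤ → ℝ)).charpoly.IsRoot (lam n))
    (habs : ∀ n, 1 < |lam n|) (hinf : Tendsto lam atTop atTop)
    (k : ℕ) (hk : 2 ≤ k) :
    MixingSeq (fun n => ((T n ^ k : SL2) : Matrix (Fin 2) (Fin 2) ℤ)) := by
  intro x y hxy
  by_cases hx : x = 0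
  · have hy : y ≠ 0 := fun h => hxy ⟨hx, h⟩
    have : {n : ℕ | ((fun n => ((T n ^ k : SL2) : Matrix (Fin 2) (Fin 2) ℤ)) n)ᵀ.mulVec x + y
        = 0} = ∅ := by
      ext n
      simp [hx, Matrix.mulVec_zero, hy]
    rw [this]
    exact Set.finite_empty
  · obtain ⟨j, rfl⟩ : ∃ j, k = j + 2 := ⟨k - 2, by omega⟩
    set D : ℤ := y 0 * x 1 - y 1 * x 0 with hD
    set C0 : ℤ := max 2 |D| with hC0
    have hfin : {n : ℕ | lam n ≤ (C0 : ℝ) + 1}.Finite := by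
      have h := hinf.eventually_gt_atTop ((C0 : ℝ) + 1)
      rw [← Nat.cofinite_eq_atTop] at h
      have h2 := Filter.eventually_cofinite.mp h
      have : {n : ℕ | lam n ≤ (C0 : ℝ) + 1} = {n : ℕ | ¬ (C0 : ℝ) + 1 < lam n} := by
        ext n; simp [not_lt]
      rw [this]
      exact h2
    apply hfin.subset
    intro n hn
    simp only [Set.mem_setOf_eq] at hn ⊢
    set A : Matrix (Fin 2) (Fin 2) ℤ := (T n : Matrix (Fin 2) (Fin 2) ℤ) with hA
    have hdetA : A.det = 1 := (T n).2
    set t : ℤ := A.trace with ht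
    set M : Matrix (Fin 2) (Fin 2) ℤ := Aᵀ with hM
    have hdetM : M.det = 1 := by rw [hM, Matrix.det_transpose, hdetA]
    have htrM : M.trace = t := by rw [hM, Matrix.trace_transpose]
    -- rewrite the mixing condition
    have hcoe : ((T n ^ (j + 2) : SL2) : Matrix (Fin 2) (Fin 2) ℤ) = A ^ (j + 2) :=
      Matrix.SpecialLinearGroup.coe_pow (T n) (j + 2)
    have hpow : (A ^ (j + 2))ᵀ = aseq t (j + 2) • M - aseq t (j + 1) • 1 := by
      rw [Matrix.transpose_pow, ← hM]
      have := pow_rep M hdetM (j + 1)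
      rwa [htrM] at this
    set u : Fin 2 → ℤ := M.mulVec x with hu
    have hn' : aseq t (j + 2) • u - aseq t (j + 1) • x + y = 0 := by
      have : (A ^ (j + 2))ᵀ.mulVec x + y = 0 := by rw [← hcoe]; exact hn
      rw [hpow, Matrix.sub_mulVec, Matrix.smul_mulVec, Matrix.smul_mulVec,
        Matrix.one_mulVec] at this
      exact this
    have h0 := congrFun hn' 0
    have h1 := congrFun hn' 1
    simp only [Pi.add_apply, Pi.sub_apply, Pi.smul_apply, smul_eq_mul, Pi.zero_apply] at h0 h1
    have key1 : aseq t (j + 2) * (u 0 * x 1 - u 1 * x 0) = -D := by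
      rw [hD]; linear_combination x 1 * h0 - x 0 * h1
    have key2 : u 0 * x 1 - u 1 * x 0 ≠ 0 := cross_ne_zero A hdetA (hT n) x hx
    have habs_a : |aseq t (j + 2)| ≤ |D| := by
      have h1' : |aseq t (j + 2)| * |u 0 * x 1 - u 1 * x 0| = |D| := by
        rw [← abs_mul, key1, abs_neg]
      have h2' : 1 ≤ |u 0 * x 1 - u 1 * x 0| := Int.one_le_abs key2
      nlinarith [abs_nonneg (aseq t (j + 2))]
    have ht_bound : |t| ≤ C0 := by
      rcases le_or_gt 2 |t| with h | h
      · exact le_trans (le_trans (abs_le_aseq t h (by omega)) habs_a) (le_max_right _ _)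
      · exact le_trans (by omega) (le_max_left _ _)
    -- real eigenvalue bound
    have hr := hroot n
    rw [charpoly_fin_two', _root_.trace_map', _root_.det_map', hdetA] at hr
    simp only [Polynomial.IsRoot, Polynomial.eval_add, Polynomial.eval_sub,
      Polynomial.eval_pow, Polynomial.eval_mul, Polynomial.eval_C, Polynomial.eval_X,
      Int.cast_one] at hr
    -- hr : lam n ^ 2 - t * lam n + 1 = 0
    have hC0two : (2 : ℤ) ≤ C0 := le_max_left _ _
    rcases le_or_gt (lam n) 0 with hneg | hpos
    · have : (0 : ℝ) ≤ (C0 : ℝ) + 1 := by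
        have : (2 : ℝ) ≤ (C0 : ℝ) := by exact_mod_cast hC0two
        linarith
      linarith
    · have hlam1 : 1 < lam n := by
        have := habs n
        rwa [abs_of_pos hpos] at this
      have htR : ((t : ℤ) : ℝ) ≤ (C0 : ℝ) := by
        have h1 : ((t : ℤ) : ℝ) ≤ |((t : ℤ) : ℝ)| := le_abs_self _
        have h2 : |((t : ℤ) : ℝ)| = ((|t| : ℤ) : ℝ) := by
          rw [Int.cast_abs]
        have h3 : ((|t| : ℤ) : ℝ) ≤ ((C0 : ℤ) : ℝ) := by exact_mod_cast ht_bound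
        linarith [h1, h2 ▸ h1]
      nlinarith [hr, hlam1, htR, mul_le_mul_of_nonneg_right htR (le_of_lt hpos)]
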